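/- arXiv:2602.14019 — 2 statements merged into one kernel-verified Lean document; each statement's English description precedes it below -/
import Mathlib

section
/- Let f, g : ℝ × ℝ² → ℝ be continuously differentiable, and let (t, x) ∈ ℝ × ℝ² with x ≠ 0. Define the good derivatives ∂̄ᵢ f = ∂ᵢ f + (xᵢ/|x|) ∂ₜ f for i = 1, 2, and the null form Q₀(f, g) = ∂ₜf ∂ₜg − ∂₁f ∂₁g − ∂₂f ∂₂g. Then |Q₀(f, g)(t, x)| ≤ C ( |∂̄f| |∂g| + |∂f| |∂̄g| )(t, x) for an absolute constant C > 0, where |∂f|² = |∂ₜf|² + |∂₁f|² + |∂₂f|² and |∂̄f|² = |∂̄₁f|² + |∂̄₂f|². -/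
open Real

/-- directional partial derivative on ℝ × ℝ² ≅ ℝ × ℝ × ℝ -/
noncomputable def pd (v : ℝ × ℝ × ℝ) (f : ℝ × ℝ × ℝ → ℝ) (p : ℝ × ℝ × ℝ) : ℝ :=
  fderiv ℝ f p v

def et : ℝ × ℝ × ℝ := (1, 0, 0)
def ex1 : ℝ × ℝ × ℝ := (0, 1, 0)
def ex2 : ℝ × ℝ × ℝ := (0, 0, 1)

/-- |x| for p = (t, x₁, x₂) -/
noncomputable def nrm (p : ℝ × ℝ × ℝ) : ℝ := Real.sqrt (p.2.1 ^ 2 + p.2.2 ^ 2)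

/-- the good derivative ∂̄₁ f = ∂₁ f + (x₁/|x|) ∂ₜ f -/
noncomputable def bd1 (f : ℝ × ℝ × ℝ → ℝ) (p : ℝ × ℝ × ℝ) : ℝ :=
  pd ex1 f p + (p.2.1 / nrm p) * pd et f p

/-- the good derivative ∂̄₂ f = ∂₂ f + (x₂/|x|) ∂ₜ f -/
noncomputable def bd2 (f : ℝ × ℝ × ℝ → ℝ) (p : ℝ × ℝ × ℝ) : ℝ :=
  pd ex2 f p + (p.2.2 / nrm p) * pd et f p

/-- |∂f| = (|∂ₜf|² + |∂₁f|² + |∂₂f|²)^{1/2} -/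
noncomputable def gradNorm (f : ℝ × ℝ × ℝ → ℝ) (p : ℝ × ℝ × ℝ) : ℝ :=
  Real.sqrt ((pd et f p) ^ 2 + (pd ex1 f p) ^ 2 + (pd ex2 f p) ^ 2)

/-- |∂̄f| = (|∂̄₁f|² + |∂̄₂f|²)^{1/2} -/
noncomputable def barNorm (f : ℝ × ℝ × ℝ → ℝ) (p : ℝ × ℝ × ℝ) : ℝ :=
  Real.sqrt ((bd1 f p) ^ 2 + (bd2 f p) ^ 2)

/-- the null form Q₀(f,g) = ∂ₜf ∂ₜg − ∂₁f ∂₁g − ∂₂f ∂₂g -/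
noncomputable def Q0 (f g : ℝ × ℝ × ℝ → ℝ) (p : ℝ × ℝ × ℝ) : ℝ :=
  pd et f p * pd et g p - pd ex1 f p * pd ex1 g p - pd ex2 f p * pd ex2 g p

/-- two-dimensional Cauchy–Schwarz -/
lemma cs2 (u1 u2 v1 v2 : ℝ) :
    |u1 * v1 + u2 * v2| ≤ Real.sqrt (u1 ^ 2 + u2 ^ 2) * Real.sqrt (v1 ^ 2 + v2 ^ 2) := by
  rw [← Real.sqrt_mul (by positivity), ← Real.sqrt_sq_eq_abs]
  exact Real.sqrt_le_sqrt (by nlinarith [sq_nonneg (u1 * v2 - u2 * v1)])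

lemma abs_le_sqrt3 (a b c : ℝ) : |a| ≤ Real.sqrt (a ^ 2 + b ^ 2 + c ^ 2) := by
  rw [← Real.sqrt_sq_eq_abs]
  exact Real.sqrt_le_sqrt (by nlinarith [sq_nonneg b, sq_nonneg c])

/-- Pointwise null-structure estimate for the Q₀ null form. -/
theorem q0_null_estimate :
    ∃ C : ℝ, 0 < C ∧
      ∀ f g : ℝ × ℝ × ℝ → ℝ, ContDiff ℝ 1 f → ContDiff ℝ 1 g →
        ∀ p : ℝ × ℝ × ℝ, p.2 ≠ 0 →
          |Q0 f g p| ≤ C * (barNorm f p * gradNorm g p + gradNorm f p * barNorm g p) := by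
  refine ⟨3, by norm_num, ?_⟩
  intro f g _hf _hg p hp
  have hpos : 0 < p.2.1 ^ 2 + p.2.2 ^ 2 := by
    have h : p.2.1 ≠ 0 ∨ p.2.2 ≠ 0 := by
      by_contra h; push_neg at h; exact hp (Prod.ext h.1 h.2)
    rcases h with h | h
    · have := pow_pos (abs_pos.2 h) 2
      rw [← sq_abs p.2.1]; nlinarith [sq_nonneg p.2.2]
    · have := pow_pos (abs_pos.2 h) 2
      rw [← sq_abs p.2.2]; nlinarith [sq_nonneg p.2.1]
  have hn : 0 < nrm p := Real.sqrt_pos.2 hpos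
  set A := pd et f p with hA
  set B := pd ex1 f p with hB
  set Cc := pd ex2 f p with hC
  set A' := pd et g p with hA'
  set B' := pd ex1 g p with hB'
  set C' := pd ex2 g p with hC'
  set w1 := p.2.1 / nrm p with hw1
  set w2 := p.2.2 / nrm p with hw2
  have hsq : nrm p ^ 2 = p.2.1 ^ 2 + p.2.2 ^ 2 := Real.sq_sqrt hpos.le
  have hω : w1 ^ 2 + w2 ^ 2 = 1 := by
    rw [hw1, hw2]
    field_simp
    linarith [hsq]
  set b1 := bd1 f p with hhb1
  set b2 := bd2 f p with hhb2
  set c1 := bd1 g p with hhc1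
  set c2 := bd2 g p with hhc2
  have hb1 : b1 = B + w1 * A := rfl
  have hb2 : b2 = Cc + w2 * A := rfl
  have hb1' : c1 = B' + w1 * A' := rfl
  have hb2' : c2 = C' + w2 * A' := rfl
  have hQ : Q0 f g p = A * A' - B * B' - Cc * C' := rfl
  have hbf : barNorm f p = Real.sqrt (b1 ^ 2 + b2 ^ 2) := rfl
  have hbg : barNorm g p = Real.sqrt (c1 ^ 2 + c2 ^ 2) := rfl
  have hgf : gradNorm f p = Real.sqrt (A ^ 2 + B ^ 2 + Cc ^ 2) := rfl
  have hgg : gradNorm g p = Real.sqrt (A' ^ 2 + B' ^ 2 + C' ^ 2) := rfl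
  clear_value A B Cc A' B' C' w1 w2 b1 b2 c1 c2
  have hkey : Q0 f g p = -(b1 * c1 + b2 * c2) + A * (w1 * c1 + w2 * c2)
      + A' * (w1 * b1 + w2 * b2) := by
    rw [hQ, hb1, hb2, hb1', hb2']
    linear_combination (-(A * A')) * hω
  clear hhb1 hhb2 hhc1 hhc2 hA hB hC hA' hB' hC' hQ hw1 hw2 _hf _hg hp hsq hn hpos
  have h1 : |b1 * c1 + b2 * c2| ≤ barNorm f p * barNorm g p := by
    rw [hbf, hbg]; exact cs2 _ _ _ _
  have h2 : |w1 * c1 + w2 * c2| ≤ barNorm g p := by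
    have := cs2 w1 w2 c1 c2
    rwa [hω, Real.sqrt_one, one_mul, ← hbg] at this
  have h3 : |w1 * b1 + w2 * b2| ≤ barNorm f p := by
    have := cs2 w1 w2 b1 b2
    rwa [hω, Real.sqrt_one, one_mul, ← hbf] at this
  have hAle : |A| ≤ gradNorm f p := by rw [hgf]; exact abs_le_sqrt3 A B Cc
  have hA'le : |A'| ≤ gradNorm g p := by rw [hgg]; exact abs_le_sqrt3 A' B' C'
  have hbf2 : barNorm f p ≤ 2 * gradNorm f p := by
    rw [hbf, hgf, show (2 : ℝ) = Real.sqrt 4 by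
      rw [show (4 : ℝ) = 2 ^ 2 by norm_num, Real.sqrt_sq (by norm_num)],
      ← Real.sqrt_mul (by norm_num)]
    apply Real.sqrt_le_sqrt
    rw [hb1, hb2]
    nlinarith [sq_nonneg (B - w1 * A), sq_nonneg (Cc - w2 * A), sq_nonneg A, hω,
      sq_nonneg (w1 * A), sq_nonneg (w2 * A)]
  have hbf0 : 0 ≤ barNorm f p := Real.sqrt_nonneg _
  have hbg0 : 0 ≤ barNorm g p := Real.sqrt_nonneg _
  have hgf0 : 0 ≤ gradNorm f p := Real.sqrt_nonneg _
  have hgg0 : 0 ≤ gradNorm g p := Real.sqrt_nonneg _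
  have habs : |Q0 f g p| ≤ barNorm f p * barNorm g p + gradNorm f p * barNorm g p
      + gradNorm g p * barNorm f p := by
    rw [hkey]
    refine (abs_add_three _ _ _).trans ?_
    rw [abs_neg, abs_mul, abs_mul]
    have t2 := mul_le_mul hAle h2 (abs_nonneg _) hgf0
    have t3 := mul_le_mul hA'le h3 (abs_nonneg _) hgg0
    linarith
  have hlast : barNorm f p * barNorm g p ≤ 2 * gradNorm f p * barNorm g p := by
    have := mul_le_mul_of_nonneg_right hbf2 hbg0
    linarith
  have hc : gradNorm g p * barNorm f p = barNorm f p * gradNorm g p := mul_comm _ _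
  linarith [habs, hlast, hc, mul_nonneg hbf0 hgg0]
end

section
/- Let w : ℝ × ℝ² → ℝ be C², fix a unit vector ω ∈ ℝ², and for r > 0, t ≥ 0 define W(t, r) = r^{1/2} w(t, r ω). Then for all t ≥ 0 and r > 0, ∂₊W(t, r) − ∂₊W(0, r + t) = ∫₀ᵗ [ (r + t − s)^{1/2} (□w)(s, (r+t−s)ω) + (r + t − s)^{−3/2} ( w/4 + Ω²w )(s, (r+t−s)ω) ] ds, where ∂₊ = ∂ₜ + ∂ᵣ, □w = ∂ₜ²w − Δw, and Ω = x₁∂₂ − x₂∂₁ is the angular derivative. -/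
open Real

/-- the flat wave operator □ = ∂ₜ² − ∂₁² − ∂₂² -/
noncomputable def Box (f : ℝ × ℝ × ℝ → ℝ) (p : ℝ × ℝ × ℝ) : ℝ :=
  pd et (pd et f) p - pd ex1 (pd ex1 f) p - pd ex2 (pd ex2 f) p

/-- the angular derivative Ω = x₁∂₂ − x₂∂₁ -/
noncomputable def OmegaD (f : ℝ × ℝ × ℝ → ℝ) (p : ℝ × ℝ × ℝ) : ℝ :=
  p.2.1 * pd ex2 f p - p.2.2 * pd ex1 f p

/-!
Put `W(s, ρ) = ρ^{1/2} w(s, ρω)`. Along the incoming null ray `s ↦ (s, r + t - s)` the derivative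
of `∂₊W` is `∂₋∂₊W = (∂ₜ² - ∂ᵣ²)W`, and since `Δ = ∂ᵣ² + ρ⁻¹∂ᵣ + ρ⁻²Ω²` this equals
`ρ^{1/2} □w + ρ^{-3/2} (w/4 + Ω²w)`. The fundamental theorem of calculus on `[0, t]` gives the
identity.
-/

section SecondDerivatives

variable {w : ℝ × ℝ × ℝ → ℝ}

theorem hasFDerivAt_fderiv_apply (hw : ContDiff ℝ 2 w) (v x : ℝ × ℝ × ℝ) :
    HasFDerivAt (fun y => fderiv ℝ w y v) ((fderiv ℝ (fderiv ℝ w) x).flip v) x := by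
  have hD : HasFDerivAt (fderiv ℝ w) (fderiv ℝ (fderiv ℝ w) x) x :=
    ((hw.fderiv_right (m := 1) (by norm_num)).differentiable (by norm_num) x).hasFDerivAt
  simpa using hD.clm_apply (hasFDerivAt_const v x)

theorem fderiv_fderiv_comm (hw : ContDiff ℝ 2 w) (x a b : ℝ × ℝ × ℝ) :
    fderiv ℝ (fderiv ℝ w) x a b = fderiv ℝ (fderiv ℝ w) x b a :=
  hw.contDiffAt.isSymmSndFDerivAt (by simp) a b

theorem pd_pd (hw : ContDiff ℝ 2 w) (a b x : ℝ × ℝ × ℝ) :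
    pd a (pd b w) x = fderiv ℝ (fderiv ℝ w) x a b := by
  unfold pd
  rw [(hasFDerivAt_fderiv_apply hw b x).fderiv]
  rfl

theorem Box_eq (hw : ContDiff ℝ 2 w) (p : ℝ × ℝ × ℝ) :
    Box w p = fderiv ℝ (fderiv ℝ w) p et et - fderiv ℝ (fderiv ℝ w) p ex1 ex1
      - fderiv ℝ (fderiv ℝ w) p ex2 ex2 := by
  rw [Box, pd_pd hw, pd_pd hw, pd_pd hw]

theorem pd_OmegaD (hw : ContDiff ℝ 2 w) (a x : ℝ × ℝ × ℝ) :
    pd a (OmegaD w) x = a.2.1 * fderiv ℝ w x ex2 + x.2.1 * fderiv ℝ (fderiv ℝ w) x a ex2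
      - (a.2.2 * fderiv ℝ w x ex1 + x.2.2 * fderiv ℝ (fderiv ℝ w) x a ex1) := by
  have hx₁ : HasFDerivAt (fun y : ℝ × ℝ × ℝ => y.2.1)
      ((ContinuousLinearMap.fst ℝ ℝ ℝ).comp (ContinuousLinearMap.snd ℝ ℝ (ℝ × ℝ))) x :=
    hasFDerivAt_fst.comp x hasFDerivAt_snd
  have hx₂ : HasFDerivAt (fun y : ℝ × ℝ × ℝ => y.2.2)
      ((ContinuousLinearMap.snd ℝ ℝ ℝ).comp (ContinuousLinearMap.snd ℝ ℝ (ℝ × ℝ))) x :=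
    hasFDerivAt_snd.comp x hasFDerivAt_snd
  have hΩ : HasFDerivAt (OmegaD w) _ x :=
    (hx₁.mul (hasFDerivAt_fderiv_apply hw ex2 x)).sub (hx₂.mul (hasFDerivAt_fderiv_apply hw ex1 x))
  rw [pd, hΩ.fderiv]
  simp only [pd, sub_apply, add_apply, smul_apply, ContinuousLinearMap.flip_apply, smul_eq_mul,
    ContinuousLinearMap.comp_apply, ContinuousLinearMap.coe_snd', ContinuousLinearMap.coe_fst']
  ring

theorem OmegaD_OmegaD_eq (hw : ContDiff ℝ 2 w) (x : ℝ × ℝ × ℝ) :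
    OmegaD (OmegaD w) x
      = x.2.1 ^ 2 * fderiv ℝ (fderiv ℝ w) x ex2 ex2
        + x.2.2 ^ 2 * fderiv ℝ (fderiv ℝ w) x ex1 ex1
        - 2 * x.2.1 * x.2.2 * fderiv ℝ (fderiv ℝ w) x ex1 ex2
        - x.2.1 * fderiv ℝ w x ex1 - x.2.2 * fderiv ℝ w x ex2 := by
  rw [OmegaD, pd_OmegaD hw ex2 x, pd_OmegaD hw ex1 x, fderiv_fderiv_comm hw x ex2 ex1]
  simp only [ex1, ex2, zero_mul, zero_add, one_mul]
  ring

/-- `Δ = ∂ᵣ² + r⁻¹ ∂ᵣ + r⁻² Ω²` at the point `(s, ρω)`, multiplied through by `ρ²`. -/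
theorem sq_mul_laplacian_polar (hw : ContDiff ℝ 2 w) {ω : ℝ × ℝ} (hω : ω.1 ^ 2 + ω.2 ^ 2 = 1)
    (s ρ : ℝ) :
    ρ ^ 2 * (fderiv ℝ (fderiv ℝ w) (s, ρ * ω.1, ρ * ω.2) ex1 ex1
        + fderiv ℝ (fderiv ℝ w) (s, ρ * ω.1, ρ * ω.2) ex2 ex2)
      = ρ ^ 2 * fderiv ℝ (fderiv ℝ w) (s, ρ * ω.1, ρ * ω.2) (0, ω.1, ω.2) (0, ω.1, ω.2)
        + ρ * fderiv ℝ w (s, ρ * ω.1, ρ * ω.2) (0, ω.1, ω.2)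
        + OmegaD (OmegaD w) (s, ρ * ω.1, ρ * ω.2) := by
  have hv : ((0 : ℝ), ω.1, ω.2) = ω.1 • ex1 + ω.2 • ex2 := by simp [ex1, ex2]
  rw [OmegaD_OmegaD_eq hw, hv]
  simp only [map_add, map_smul, add_apply, smul_apply, smul_eq_mul, fderiv_fderiv_comm hw _ ex2 ex1]
  linear_combination -ρ ^ 2 * (fderiv ℝ (fderiv ℝ w) (s, ρ * ω.1, ρ * ω.2) ex1 ex1
    + fderiv ℝ (fderiv ℝ w) (s, ρ * ω.1, ρ * ω.2) ex2 ex2) * hω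

theorem continuous_fderiv_apply (hw : ContDiff ℝ 2 w) (a : ℝ × ℝ × ℝ) :
    Continuous fun p => fderiv ℝ w p a :=
  (hw.continuous_fderiv (by norm_num)).clm_apply continuous_const

theorem continuous_fderiv_fderiv_apply (hw : ContDiff ℝ 2 w) (a b : ℝ × ℝ × ℝ) :
    Continuous fun p => fderiv ℝ (fderiv ℝ w) p a b :=
  (((hw.fderiv_right (m := 1) (by norm_num)).continuous_fderiv one_ne_zero).clm_apply
    continuous_const).clm_apply continuous_const

theorem continuous_Box (hw : ContDiff ℝ 2 w) : Continuous (Box w) := by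
  have := continuous_fderiv_fderiv_apply hw
  rw [funext (Box_eq hw)]
  fun_prop

theorem continuous_OmegaD_OmegaD (hw : ContDiff ℝ 2 w) : Continuous (OmegaD (OmegaD w)) := by
  have := continuous_fderiv_apply hw
  have := continuous_fderiv_fderiv_apply hw
  rw [funext (OmegaD_OmegaD_eq hw)]
  fun_prop

end SecondDerivatives

section NullRay

variable {w : ℝ × ℝ × ℝ → ℝ} {ω : ℝ × ℝ}

/-- `∂₊(ρ^{1/2} w)(s, ρω)`, written out by the product rule. -/
noncomputable def radialPlusDeriv (w : ℝ × ℝ × ℝ → ℝ) (ω : ℝ × ℝ) (s ρ : ℝ) : ℝ :=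
  1 / 2 * ρ ^ (-(1:ℝ) / 2) * w (s, ρ * ω.1, ρ * ω.2)
    + ρ ^ ((1:ℝ) / 2) * fderiv ℝ w (s, ρ * ω.1, ρ * ω.2) (1, ω.1, ω.2)

theorem fderiv_rpow_half_mul_apply_one_one {q : ℝ × ℝ} (hq : 0 < q.2)
    (hw : DifferentiableAt ℝ w (q.1, q.2 * ω.1, q.2 * ω.2)) :
    fderiv ℝ (fun q : ℝ × ℝ => q.2 ^ ((1:ℝ) / 2) * w (q.1, q.2 * ω.1, q.2 * ω.2)) q (1, 1)
      = radialPlusDeriv w ω q.1 q.2 := by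
  have hpolar : HasFDerivAt (fun q : ℝ × ℝ => ((q.1, q.2 * ω.1, q.2 * ω.2) : ℝ × ℝ × ℝ))
      ((ContinuousLinearMap.fst ℝ ℝ ℝ).prod ((ω.1 • ContinuousLinearMap.snd ℝ ℝ ℝ).prod
        (ω.2 • ContinuousLinearMap.snd ℝ ℝ ℝ))) q :=
    hasFDerivAt_fst.prodMk ((hasFDerivAt_snd.mul_const ω.1).prodMk (hasFDerivAt_snd.mul_const ω.2))
  have hsqrt : HasFDerivAt (fun q : ℝ × ℝ => q.2 ^ ((1:ℝ) / 2))
      (((1:ℝ) / 2 * q.2 ^ ((1:ℝ) / 2 - 1)) • ContinuousLinearMap.snd ℝ ℝ ℝ) q :=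
    (hasDerivAt_rpow_const (Or.inl hq.ne')).comp_hasFDerivAt q hasFDerivAt_snd
  have hprod : HasFDerivAt
      (fun q : ℝ × ℝ => q.2 ^ ((1:ℝ) / 2) * w (q.1, q.2 * ω.1, q.2 * ω.2)) _ q :=
    hsqrt.mul (hw.hasFDerivAt.comp q hpolar)
  rw [hprod.fderiv, radialPlusDeriv, show (1:ℝ) / 2 - 1 = -(1:ℝ) / 2 by norm_num]
  simp only [add_apply, smul_apply, ContinuousLinearMap.comp_apply, ContinuousLinearMap.prod_apply,
    ContinuousLinearMap.coe_fst', ContinuousLinearMap.coe_snd', smul_eq_mul, mul_one, Prod.mk.eta]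
  ring

theorem hasDerivAt_radialPlusDeriv_along_ray (hw : ContDiff ℝ 2 w)
    (hω : ω.1 ^ 2 + ω.2 ^ 2 = 1) {c s : ℝ} (hs : 0 < c - s) :
    HasDerivAt (fun s => radialPlusDeriv w ω s (c - s))
      ((c - s) ^ ((1:ℝ) / 2) * Box w (s, (c - s) * ω.1, (c - s) * ω.2)
        + (c - s) ^ (-(3:ℝ) / 2) * (w (s, (c - s) * ω.1, (c - s) * ω.2) / 4
          + OmegaD (OmegaD w) (s, (c - s) * ω.1, (c - s) * ω.2))) s := by
  have hρ : HasDerivAt (fun s : ℝ => c - s) (-1) s := by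
    simpa using (hasDerivAt_id s).const_sub c
  have hray : HasDerivAt (fun s : ℝ => ((s, (c - s) * ω.1, (c - s) * ω.2) : ℝ × ℝ × ℝ))
      (et - (0, ω.1, ω.2)) s := by
    refine ((hasDerivAt_id' s).prodMk ((hρ.mul_const ω.1).prodMk (hρ.mul_const ω.2))).congr_deriv ?_
    simp [et, Prod.ext_iff]
  have hetv : ((1:ℝ), ω.1, ω.2) = et + (0, ω.1, ω.2) := by simp [et, Prod.ext_iff]
  have hw₀ := (hw.differentiable (by norm_num) _).hasFDerivAt.comp_hasDerivAt s hray
  have hw₁ := (hasFDerivAt_fderiv_apply hw (et + (0, ω.1, ω.2)) _).comp_hasDerivAt s hray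
  have hneg := hρ.rpow_const (p := -(1:ℝ) / 2) (Or.inl hs.ne')
  have hpos := hρ.rpow_const (p := (1:ℝ) / 2) (Or.inl hs.ne')
  simp only [radialPlusDeriv, hetv]
  refine (((hneg.const_mul (1 / 2 : ℝ)).mul hw₀).add (hpos.mul hw₁)).congr_deriv ?_
  have hlap := sq_mul_laplacian_polar hw hω s (c - s)
  set ρ := c - s
  set p : ℝ × ℝ × ℝ := (s, ρ * ω.1, ρ * ω.2)
  set v : ℝ × ℝ × ℝ := (0, ω.1, ω.2)
  -- Writing every power of `ρ` as a multiple of `ρ^{-3/2}` leaves exactly the polar form of `Δ`.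
  have e₁ : ρ ^ ((1:ℝ) / 2) = ρ ^ (-(3:ℝ) / 2) * ρ ^ 2 := by
    rw [← rpow_natCast, ← rpow_add hs]; norm_num
  have e₂ : ρ ^ (-(1:ℝ) / 2) = ρ ^ (-(3:ℝ) / 2) * ρ := by
    rw [← rpow_add_one hs.ne']; norm_num
  rw [Box_eq hw, show -(1:ℝ) / 2 - 1 = -(3:ℝ) / 2 by norm_num,
    show (1:ℝ) / 2 - 1 = -(1:ℝ) / 2 by norm_num, e₁, e₂]
  simp only [Function.comp_apply, map_add, map_sub, ContinuousLinearMap.flip_apply, add_apply,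
    fderiv_fderiv_comm hw p v et]
  linear_combination ρ ^ (-(3:ℝ) / 2) * hlap

end NullRay

/-- Integration of the reduced wave equation along incoming null rays:
∂₊(r^{1/2}w)(t, rω) − ∂₊(r^{1/2}w)(0, (r+t)ω) =
∫₀ᵗ [(r+t−s)^{1/2} □w + (r+t−s)^{−3/2}(w/4 + Ω²w)](s, (r+t−s)ω) ds. -/
theorem null_ray_integration (w : ℝ × ℝ × ℝ → ℝ) (hw : ContDiff ℝ 2 w)
    (ω : ℝ × ℝ) (hω : ω.1 ^ 2 + ω.2 ^ 2 = 1) :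
    ∀ t : ℝ, 0 ≤ t → ∀ r : ℝ, 0 < r →
      fderiv ℝ (fun q : ℝ × ℝ => q.2 ^ ((1:ℝ)/2) * w (q.1, q.2 * ω.1, q.2 * ω.2))
          (t, r) (1, 1)
        - fderiv ℝ (fun q : ℝ × ℝ => q.2 ^ ((1:ℝ)/2) * w (q.1, q.2 * ω.1, q.2 * ω.2))
            (0, r + t) (1, 1)
      = ∫ s in (0:ℝ)..t,
          ((r + t - s) ^ ((1:ℝ)/2) * Box w (s, (r + t - s) * ω.1, (r + t - s) * ω.2)
            + (r + t - s) ^ (-(3:ℝ)/2)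
              * (w (s, (r + t - s) * ω.1, (r + t - s) * ω.2) / 4
                + OmegaD (OmegaD w) (s, (r + t - s) * ω.1, (r + t - s) * ω.2))) := by
  intro t ht r hr
  have hρ : ∀ s ∈ Set.uIcc 0 t, 0 < r + t - s := fun s hs => by
    rw [Set.uIcc_of_le ht] at hs
    linarith [hs.2]
  have hdiff := hw.differentiable (by norm_num)
  have hrpow (a : ℝ) : ContinuousOn (fun s => (r + t - s) ^ a) (Set.uIcc 0 t) :=
    (continuousOn_const.sub continuousOn_id).rpow_const fun s hs => Or.inl (hρ s hs).ne'
  have hray : Continuous fun s => ((s, (r + t - s) * ω.1, (r + t - s) * ω.2) : ℝ × ℝ × ℝ) := by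
    fun_prop
  have hint := ContinuousOn.intervalIntegrable (μ := MeasureTheory.volume) <|
    ((hrpow ((1:ℝ) / 2)).mul ((continuous_Box hw).comp hray).continuousOn).add
      ((hrpow (-(3:ℝ) / 2)).mul (((hw.continuous.comp hray).div_const 4).add
        ((continuous_OmegaD_OmegaD hw).comp hray)).continuousOn)
  rw [intervalIntegral.integral_eq_sub_of_hasDerivAt
      (fun s hs => hasDerivAt_radialPlusDeriv_along_ray hw hω (hρ s hs)) hint,
    fderiv_rpow_half_mul_apply_one_one hr (hdiff _),
    fderiv_rpow_half_mul_apply_one_one (by dsimp only; linarith) (hdiff _)]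
  simp only [add_sub_cancel_right, sub_zero]
end
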